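/- arXiv:2603.00716 — 3 statements merged into one kernel-verified Lean document; each statement's English description precedes it below -/
import Mathlib

section
/- Let λ > 0, let v_0, v_1, ..., v_n ∈ ℝ^d, and let Λ = λI + Σ_{i=1}^n v_i v_iᵀ. If the elliptical norm ‖v_0‖_{Λ^{-1}} := √(v_0ᵀ Λ^{-1} v_0) satisfies ‖v_0‖_{Λ^{-1}} ≤ ε, then there exist coefficients c_1, ..., c_n ∈ ℝ such that Σ_{i=1}^n c_i² ≤ ε² and ‖v_0 − Σ_{i=1}^n c_i v_i‖_2 ≤ √λ · ε. -/
open Matrix BigOperators Finset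

noncomputable def ellipNorm {d : ℕ} (V : Matrix (Fin d) (Fin d) ℝ) (x : Fin d → ℝ) : ℝ :=
  Real.sqrt (x ⬝ᵥ V.mulVec x)

noncomputable def l2norm {d : ℕ} (x : Fin d → ℝ) : ℝ :=
  Real.sqrt (x ⬝ᵥ x)

/-! With `w = Λ⁻¹ v₀` and `cᵢ = vᵢ ⬝ w`, the identity `Λ w = v₀` reads
`v₀ - ∑ cᵢ vᵢ = λ w`, and pairing it with `w` gives `v₀ ⬝ Λ⁻¹ v₀ = λ ‖w‖² + ∑ cᵢ²`.
Both bounds follow, since the left side is at most `ε²`. -/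

namespace Matrix

variable {ι m : Type*} [Fintype ι] [Fintype m] [DecidableEq m]

def regularizedGram (lam : ℝ) (u : ι → m → ℝ) : Matrix m m ℝ :=
  lam • 1 + ∑ i, vecMulVec (u i) (u i)

variable {lam : ℝ} {u : ι → m → ℝ}

theorem regularizedGram_mulVec (x : m → ℝ) :
    regularizedGram lam u *ᵥ x = lam • x + ∑ i, (u i ⬝ᵥ x) • u i := by
  simp only [regularizedGram, add_mulVec, smul_mulVec, one_mulVec, sum_mulVec, vecMulVec_mulVec,
    op_smul_eq_smul]

theorem regularizedGram_posDef (hlam : 0 < lam) : (regularizedGram lam u).PosDef :=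
  (PosDef.one.smul hlam).add_posSemidef <|
    posSemidef_sum _ fun i _ => by simpa using posSemidef_vecMulVec_self_star (u i)

variable {w x : m → ℝ}

theorem sub_sum_eq_smul_of_regularizedGram_mulVec (hw : regularizedGram lam u *ᵥ w = x) :
    x - ∑ i, (u i ⬝ᵥ w) • u i = lam • w := by
  rw [← hw, regularizedGram_mulVec, add_sub_cancel_right]

theorem dotProduct_eq_of_regularizedGram_mulVec (hw : regularizedGram lam u *ᵥ w = x) :
    x ⬝ᵥ w = lam * (w ⬝ᵥ w) + ∑ i, (u i ⬝ᵥ w) ^ 2 := by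
  simp only [← hw, regularizedGram_mulVec, add_dotProduct, smul_dotProduct, sum_dotProduct,
    smul_eq_mul, sq]

theorem exists_coeffs_of_dotProduct_inv_mulVec_le (hlam : 0 < lam) {ε : ℝ}
    (h : x ⬝ᵥ (regularizedGram lam u)⁻¹ *ᵥ x ≤ ε ^ 2) :
    ∃ c : ι → ℝ, ∑ i, c i ^ 2 ≤ ε ^ 2 ∧
      (x - ∑ i, c i • u i) ⬝ᵥ (x - ∑ i, c i • u i) ≤ lam * ε ^ 2 := by
  set w := (regularizedGram lam u)⁻¹ *ᵥ x
  have hw : regularizedGram lam u *ᵥ w = x := by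
    rw [mulVec_mulVec, mul_nonsing_inv _ ((isUnit_iff_isUnit_det _).mp
      (regularizedGram_posDef hlam).isUnit), one_mulVec]
  have hq := dotProduct_eq_of_regularizedGram_mulVec hw
  have hww : 0 ≤ lam * (w ⬝ᵥ w) :=
    mul_nonneg hlam.le (by simpa using dotProduct_star_self_nonneg w)
  refine ⟨fun i => u i ⬝ᵥ w, by linarith, ?_⟩
  rw [sub_sum_eq_smul_of_regularizedGram_mulVec hw, smul_dotProduct, dotProduct_smul,
    smul_eq_mul, smul_eq_mul]
  have hc : 0 ≤ ∑ i, (u i ⬝ᵥ w) ^ 2 := sum_nonneg fun i _ => sq_nonneg _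
  exact mul_le_mul_of_nonneg_left (by linarith) hlam.le

end Matrix

theorem stmt_0 {d n : ℕ} (lam ε : ℝ) (hlam : 0 < lam)
    (v : Fin (n + 1) → Fin d → ℝ)
    (Λ : Matrix (Fin d) (Fin d) ℝ)
    (hΛ : Λ = lam • (1 : Matrix (Fin d) (Fin d) ℝ) +
      ∑ i : Fin n, vecMulVec (v i.succ) (v i.succ))
    (h0 : ellipNorm Λ⁻¹ (v 0) ≤ ε) :
    ∃ c : Fin n → ℝ,
      (∑ i : Fin n, (c i) ^ 2 ≤ ε ^ 2) ∧
      l2norm (v 0 - ∑ i : Fin n, c i • v i.succ) ≤ Real.sqrt lam * ε := by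
  obtain ⟨hε, hq⟩ : 0 ≤ ε ∧ v 0 ⬝ᵥ Λ⁻¹ *ᵥ v 0 ≤ ε ^ 2 := Real.sqrt_le_iff.mp h0
  rw [hΛ] at hq
  obtain ⟨c, hc, hres⟩ :=
    exists_coeffs_of_dotProduct_inv_mulVec_le (u := fun i : Fin n => v i.succ) hlam hq
  refine ⟨c, hc, Real.sqrt_le_iff.mpr ⟨by positivity, ?_⟩⟩
  rwa [mul_pow, Real.sq_sqrt hlam.le]
end

section
/- Let κ ≥ 0, let δ_1, ..., δ_n be real numbers with |δ_i| ≤ κ for all i, and let φ_1, ..., φ_n ∈ ℝ^d. Let Λ = λI + Σ_{i=1}^n φ_i φ_iᵀ with λ > 0. Then ‖Σ_{i=1}^n φ_i δ_i‖²_{Λ^{-1}} ≤ n κ². -/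
open Matrix BigOperators Finset

/-! With `y = Λ⁻¹ x` and `x = ∑ δᵢ φᵢ`, the quantity `S = xᵀ Λ⁻¹ x` equals both `yᵀ Λ y` and
`∑ δᵢ ⟪φᵢ, y⟫`. Since `Λ ≥ ∑ φᵢ φᵢᵀ` in the Loewner order, `∑ ⟪φᵢ, y⟫² ≤ yᵀ Λ y = S`, so
Cauchy–Schwarz gives `S² ≤ (∑ δᵢ²) S`, i.e. `S ≤ ∑ δᵢ² ≤ n κ²`. -/

open scoped MatrixOrder

namespace Matrix

variable {m ι : Type*} [Fintype m] [Fintype ι]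

lemma dotProduct_vecMulVec_self_mulVec (u y : m → ℝ) :
    y ⬝ᵥ vecMulVec u u *ᵥ y = (u ⬝ᵥ y) ^ 2 := by
  rw [vecMulVec_mulVec, op_smul_eq_smul, dotProduct_smul, smul_eq_mul, dotProduct_comm y u, sq]

lemma sum_sq_dotProduct_le_dotProduct_mulVec {Λ : Matrix m m ℝ} (φ : ι → m → ℝ)
    (hΛ : ∑ i, vecMulVec (φ i) (φ i) ≤ Λ) (y : m → ℝ) :
    ∑ i, (φ i ⬝ᵥ y) ^ 2 ≤ y ⬝ᵥ Λ *ᵥ y := by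
  have hgap : 0 ≤ y ⬝ᵥ (Λ - ∑ i, vecMulVec (φ i) (φ i)) *ᵥ y := by
    simpa using (le_iff.mp hΛ).dotProduct_mulVec_nonneg y
  rw [sub_mulVec, dotProduct_sub, sum_mulVec, dotProduct_sum] at hgap
  simpa only [dotProduct_vecMulVec_self_mulVec, sub_nonneg] using hgap

variable [DecidableEq m]

theorem dotProduct_inv_mulVec_sum_smul_le {Λ : Matrix m m ℝ} (φ : ι → m → ℝ)
    (hΛ : ∑ i, vecMulVec (φ i) (φ i) ≤ Λ) (δ : ι → ℝ) :
    (∑ i, δ i • φ i) ⬝ᵥ Λ⁻¹ *ᵥ (∑ i, δ i • φ i) ≤ ∑ i, δ i ^ 2 := by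
  set x := ∑ i, δ i • φ i
  by_cases hdet : IsUnit Λ.det
  swap
  · rw [nonsing_inv_apply_not_isUnit Λ hdet, zero_mulVec, dotProduct_zero]
    positivity
  set y := Λ⁻¹ *ᵥ x
  have hx : Λ *ᵥ y = x := by rw [mulVec_mulVec, mul_nonsing_inv Λ hdet, one_mulVec]
  have hS_quad : x ⬝ᵥ y = y ⬝ᵥ Λ *ᵥ y := by rw [hx, dotProduct_comm]
  have hS_sum : x ⬝ᵥ y = ∑ i, δ i * (φ i ⬝ᵥ y) := by
    simp only [x, sum_dotProduct, smul_dotProduct, smul_eq_mul]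
  have hφy : ∑ i, (φ i ⬝ᵥ y) ^ 2 ≤ x ⬝ᵥ y :=
    hS_quad ▸ sum_sq_dotProduct_le_dotProduct_mulVec φ hΛ y
  have hCS : (x ⬝ᵥ y) ^ 2 ≤ (∑ i, δ i ^ 2) * ∑ i, (φ i ⬝ᵥ y) ^ 2 :=
    hS_sum ▸ sum_mul_sq_le_sq_mul_sq _ _ _
  have hS_nonneg : 0 ≤ x ⬝ᵥ y := (sum_nonneg fun i _ => sq_nonneg _).trans hφy
  nlinarith [sum_nonneg fun i (_ : i ∈ univ) => sq_nonneg (δ i)]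

end Matrix

theorem stmt_1_general {d n : ℕ} (lam κ : ℝ) (hlam : 0 < lam)
    (δ : Fin n → ℝ) (hδ : ∀ i, |δ i| ≤ κ)
    (φ : Fin n → Fin d → ℝ)
    (Λ : Matrix (Fin d) (Fin d) ℝ)
    (hΛ : Λ = lam • (1 : Matrix (Fin d) (Fin d) ℝ) + ∑ i : Fin n, vecMulVec (φ i) (φ i)) :
    (ellipNorm Λ⁻¹ (∑ i : Fin n, δ i • φ i)) ^ 2 ≤ n * κ ^ 2 := by
  have hle : ∑ i, vecMulVec (φ i) (φ i) ≤ Λ := by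
    rw [le_iff, hΛ, add_sub_cancel_right]
    exact PosSemidef.one.smul hlam.le
  have hδ_sq : ∑ i, δ i ^ 2 ≤ n * κ ^ 2 := by
    refine (sum_le_sum fun i _ => ?_).trans_eq (by simp : ∑ _ : Fin n, κ ^ 2 = n * κ ^ 2)
    exact sq_abs (δ i) ▸ pow_le_pow_left₀ (abs_nonneg _) (hδ i) 2
  rw [ellipNorm, Real.sq_sqrt']
  exact max_le ((dotProduct_inv_mulVec_sum_smul_le φ hle δ).trans hδ_sq) (by positivity)

theorem stmt_1 {d n : ℕ} (lam κ : ℝ) (hlam : 0 < lam) (hκ : 0 ≤ κ)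
    (δ : Fin n → ℝ) (hδ : ∀ i, |δ i| ≤ κ)
    (φ : Fin n → Fin d → ℝ)
    (Λ : Matrix (Fin d) (Fin d) ℝ)
    (hΛ : Λ = lam • (1 : Matrix (Fin d) (Fin d) ℝ) + ∑ i : Fin n, vecMulVec (φ i) (φ i)) :
    (ellipNorm Λ⁻¹ (∑ i : Fin n, δ i • φ i)) ^ 2 ≤ n * κ ^ 2 :=
  stmt_1_general lam κ hlam δ hδ φ Λ hΛ
end

section
/- Let λ > 0, d ≥ 1, and let φ_1, ..., φ_D ∈ ℝ^d with ‖φ_i‖_2 ≤ 1 for all i. Define Σ_0 = λI and Σ_k = λI + Σ_{i=1}^k φ_i φ_iᵀ. Suppose that ‖φ_i‖_{Σ_{i−1}^{-1}} ≥ 2^{−l} for every 1 ≤ i ≤ D, for some l ≥ 1. Then D ≤ 2d·2^{2l}·ln(1 + D/(λd)). -/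
open Matrix BigOperators Finset

noncomputable def covMat {d : ℕ} (lam : ℝ) (φ : ℕ → Fin d → ℝ) (k : ℕ) :
    Matrix (Fin d) (Fin d) ℝ :=
  lam • (1 : Matrix (Fin d) (Fin d) ℝ) + ∑ i ∈ Finset.range k, vecMulVec (φ i) (φ i)

/-!
Adding `φ φᵀ` to a positive definite `Σ` multiplies its determinant by `1 + ‖φ‖²_{Σ⁻¹}`
(matrix determinant lemma), so `det Σ_D = λ^d ∏ (1 + ‖φ_i‖²_{Σ_{i-1}⁻¹})`; with
`min 1 x ≤ 2 log (1 + x)` this is the elliptical potential lemma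
`∑ min 1 ‖φ_i‖² ≤ 2 log (det Σ_D / λ^d)`. AM-GM on the eigenvalues gives
`det Σ_D ≤ (tr Σ_D / d)^d ≤ (λ + D/d)^d`, and each of the `D` summands is at least `2^{-2l}`.
-/

theorem Real.prod_le_sum_div_card_pow {ι : Type*} (s : Finset ι) {z : ι → ℝ}
    (hz : ∀ i ∈ s, 0 ≤ z i) : ∏ i ∈ s, z i ≤ ((∑ i ∈ s, z i) / #s) ^ #s := by
  rcases s.eq_empty_or_nonempty with rfl | hs
  · simp
  have hcard : (0 : ℝ) < #s := by exact_mod_cast hs.card_pos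
  have hamgm := Real.geom_mean_le_arith_mean_weighted s (fun _ => (#s : ℝ)⁻¹) z
    (fun _ _ => by positivity) (by simp [hcard.ne']) hz
  rw [← Finset.mul_sum, inv_mul_eq_div, Real.finsetProd_rpow s z hz] at hamgm
  calc ∏ i ∈ s, z i = ((∏ i ∈ s, z i) ^ (#s : ℝ)⁻¹) ^ #s := by
        rw [← Real.rpow_natCast, ← Real.rpow_mul (prod_nonneg hz), inv_mul_cancel₀ hcard.ne',
          Real.rpow_one]
    _ ≤ ((∑ i ∈ s, z i) / #s) ^ #s :=
        pow_le_pow_left₀ (Real.rpow_nonneg (prod_nonneg hz) _) hamgm _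

theorem Matrix.PosSemidef.det_le_trace_div_card_pow {n : Type*} [Fintype n] [DecidableEq n]
    {A : Matrix n n ℝ} (hA : A.PosSemidef) :
    A.det ≤ (A.trace / Fintype.card n) ^ Fintype.card n := by
  have hdet : A.det = ∏ i, hA.isHermitian.eigenvalues i := by
    simpa using hA.isHermitian.det_eq_prod_eigenvalues
  have htr : A.trace = ∑ i, hA.isHermitian.eigenvalues i := by
    simpa using hA.isHermitian.trace_eq_sum_eigenvalues
  rw [hdet, htr]
  exact Real.prod_le_sum_div_card_pow univ fun i _ => hA.eigenvalues_nonneg i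

theorem Real.min_one_le_two_mul_log_one_add {x : ℝ} (hx : 0 ≤ x) :
    min 1 x ≤ 2 * Real.log (1 + x) := by
  have hlog := Real.one_sub_inv_le_log_of_pos (by positivity : 0 < 1 + x)
  have hinv : 1 - (1 + x)⁻¹ = x / (1 + x) := by field_simp; ring
  rw [hinv] at hlog
  rcases le_total x 1 with h | h
  · calc min 1 x ≤ x := min_le_right _ _
      _ ≤ 2 * (x / (1 + x)) := by rw [mul_div_assoc', le_div_iff₀ (by positivity)]; nlinarith
      _ ≤ 2 * Real.log (1 + x) := by gcongr
  · calc min 1 x ≤ 1 := min_le_left _ _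
      _ ≤ 2 * (x / (1 + x)) := by rw [mul_div_assoc', le_div_iff₀ (by positivity)]; linarith
      _ ≤ 2 * Real.log (1 + x) := by gcongr

theorem ellipNorm_sq {d : ℕ} {V : Matrix (Fin d) (Fin d) ℝ} (hV : V.PosSemidef) (x : Fin d → ℝ) :
    ellipNorm V x ^ 2 = x ⬝ᵥ V *ᵥ x :=
  Real.sq_sqrt (hV.dotProduct_mulVec_nonneg x)

section CovMat

variable {d : ℕ} {lam : ℝ} (φ : ℕ → Fin d → ℝ)

theorem covMat_posDef (hlam : 0 < lam) (k : ℕ) : (covMat lam φ k).PosDef := by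
  have hscalar : (lam • (1 : Matrix (Fin d) (Fin d) ℝ)).PosDef := by
    rw [smul_one_eq_diagonal]
    exact posDef_diagonal_iff.2 fun _ => hlam
  exact hscalar.add_posSemidef
    (posSemidef_sum _ fun i _ => by simpa using posSemidef_vecMulVec_self_star (φ i))

theorem covMat_succ (k : ℕ) : covMat lam φ (k + 1) = covMat lam φ k + vecMulVec (φ k) (φ k) := by
  simp only [covMat, sum_range_succ, add_assoc]

theorem trace_covMat (k : ℕ) :
    (covMat lam φ k).trace = lam * d + ∑ i ∈ range k, φ i ⬝ᵥ φ i := by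
  simp [covMat, trace_sum, trace_vecMulVec]

theorem det_covMat_succ (hlam : 0 < lam) (k : ℕ) :
    (covMat lam φ (k + 1)).det =
      (covMat lam φ k).det * (1 + ellipNorm (covMat lam φ k)⁻¹ (φ k) ^ 2) := by
  have hpos := covMat_posDef φ hlam k
  rw [covMat_succ, vecMulVec_eq Unit,
    det_add_replicateCol_mul_replicateRow hpos.det_pos.ne'.isUnit, ellipNorm_sq hpos.posSemidef.inv,
    det_unique (n := Unit), Matrix.add_apply, one_apply_eq,
    Matrix.mul_assoc, ← replicateCol_mulVec, replicateRow_mul_replicateCol_apply]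

theorem det_covMat (hlam : 0 < lam) (k : ℕ) :
    (covMat lam φ k).det =
      lam ^ d * ∏ i ∈ range k, (1 + ellipNorm (covMat lam φ i)⁻¹ (φ i) ^ 2) := by
  induction k with
  | zero => simp [covMat]
  | succ k ih => rw [det_covMat_succ φ hlam, ih, prod_range_succ, mul_assoc]

theorem det_covMat_le (hlam : 0 < lam) {k : ℕ} (hφ : ∀ i < k, l2norm (φ i) ≤ 1) :
    (covMat lam φ k).det ≤ (lam + k / d) ^ d := by
  have htrace : (covMat lam φ k).trace ≤ lam * d + k := by
    rw [trace_covMat]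
    gcongr
    simpa using sum_le_sum fun i hi => Real.sqrt_le_one.mp (hφ i (mem_range.mp hi))
  calc (covMat lam φ k).det ≤ ((covMat lam φ k).trace / d) ^ d := by
        simpa using (covMat_posDef φ hlam k).posSemidef.det_le_trace_div_card_pow
    _ ≤ ((lam * d + k) / d) ^ d := by
        gcongr
        exact div_nonneg (covMat_posDef φ hlam k).posSemidef.trace_nonneg d.cast_nonneg
    _ = (lam + k / d) ^ d := by
        rcases Nat.eq_zero_or_pos d with rfl | hd
        · simp
        · rw [add_div, mul_div_cancel_right₀ _ (by positivity)]

theorem sum_min_one_ellipNorm_sq_le_two_mul_log_det (hlam : 0 < lam) (k : ℕ) :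
    ∑ i ∈ range k, min 1 (ellipNorm (covMat lam φ i)⁻¹ (φ i) ^ 2) ≤
      2 * Real.log ((covMat lam φ k).det / lam ^ d) := by
  have hpos : ∀ i ∈ range k, 0 < 1 + ellipNorm (covMat lam φ i)⁻¹ (φ i) ^ 2 :=
    fun i _ => by positivity
  rw [det_covMat φ hlam, mul_div_cancel_left₀ _ (by positivity), Real.log_prod fun i hi =>
    (hpos i hi).ne', mul_sum]
  exact sum_le_sum fun i _ => Real.min_one_le_two_mul_log_one_add (sq_nonneg _)

theorem log_det_covMat_div_le (hlam : 0 < lam) {k : ℕ} (hφ : ∀ i < k, l2norm (φ i) ≤ 1) :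
    Real.log ((covMat lam φ k).det / lam ^ d) ≤ d * Real.log (1 + k / (lam * d)) := by
  calc Real.log ((covMat lam φ k).det / lam ^ d)
      ≤ Real.log ((lam + k / d) ^ d / lam ^ d) := by
        gcongr
        · exact div_pos (covMat_posDef φ hlam k).det_pos (by positivity)
        · exact det_covMat_le φ hlam hφ
    _ = d * Real.log (1 + k / (lam * d)) := by
        rw [← div_pow, Real.log_pow, add_div, div_self hlam.ne', div_div, mul_comm (d : ℝ) lam]

end CovMat

theorem stmt_4_general {d : ℕ} (lam : ℝ) (hlam : 0 < lam)
    (D l : ℕ) (φ : ℕ → Fin d → ℝ)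
    (hφ : ∀ i, l2norm (φ i) ≤ 1)
    (hbig : ∀ i < D, (2 : ℝ) ^ (-(l : ℤ)) ≤ ellipNorm (covMat lam φ i)⁻¹ (φ i)) :
    (D : ℝ) ≤ 2 * d * 2 ^ (2 * l) * Real.log (1 + D / (lam * d)) := by
  have hthreshold : (2 : ℝ) ^ (-(l : ℤ)) = ((2 : ℝ) ^ l)⁻¹ := by rw [_root_.zpow_neg, zpow_natCast]
  have hmin : ∀ i < D, (((2 : ℝ) ^ l)⁻¹) ^ 2 ≤ min 1 (ellipNorm (covMat lam φ i)⁻¹ (φ i) ^ 2) :=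
    fun i hi => le_min
      (pow_le_one₀ (by positivity) (inv_le_one_of_one_le₀ (one_le_pow₀ one_le_two)))
      (pow_le_pow_left₀ (by positivity) (hthreshold ▸ hbig i hi) 2)
  have hsum : (D : ℝ) * (((2 : ℝ) ^ l)⁻¹) ^ 2 ≤ 2 * (d * Real.log (1 + D / (lam * d))) :=
    calc (D : ℝ) * (((2 : ℝ) ^ l)⁻¹) ^ 2
        ≤ ∑ i ∈ range D, min 1 (ellipNorm (covMat lam φ i)⁻¹ (φ i) ^ 2) := by
          simpa using sum_le_sum fun i hi => hmin i (mem_range.mp hi)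
      _ ≤ 2 * Real.log ((covMat lam φ D).det / lam ^ d) :=
          sum_min_one_ellipNorm_sq_le_two_mul_log_det φ hlam D
      _ ≤ 2 * (d * Real.log (1 + D / (lam * d))) := by
          gcongr
          exact log_det_covMat_div_le φ hlam fun i _ => hφ i
  rw [inv_pow, ← div_eq_mul_inv, div_le_iff₀ (by positivity)] at hsum
  exact hsum.trans_eq (by ring)

theorem stmt_4 {d : ℕ} (hd : 1 ≤ d) (lam : ℝ) (hlam : 0 < lam)
    (D l : ℕ) (hl : 1 ≤ l) (φ : ℕ → Fin d → ℝ)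
    (hφ : ∀ i, l2norm (φ i) ≤ 1)
    (hbig : ∀ i < D, (2 : ℝ) ^ (-(l : ℤ)) ≤ ellipNorm (covMat lam φ i)⁻¹ (φ i)) :
    (D : ℝ) ≤ 2 * d * 2 ^ (2 * l) * Real.log (1 + D / (lam * d)) :=
  stmt_4_general lam hlam D l φ hφ hbig
end
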